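/- arXiv:1505.02293 — 2 statements merged into one kernel-verified Lean document; each statement's English description precedes it below -/
import Mathlib

section
/- Let (b_p)_{p ≥ -1} be a nonnegative sequence such that ∑_{p} 2^p b_p < ∞ and 2^Q b_Q → 0 as Q → ∞. Then lim_{Q → ∞} ∑_{p ≥ -1} 2^{-|p-Q|/2} 2^p b_p = 0. -/
open Filter Topology

/-!
For fixed `p` the weight `2^{-|p-Q|/2}` lies in `[0, 1]` and tends to `0` as `Q → ∞`, so the
series is dominated termwise by the convergent series `∑_p |2^p b_p|` and each of its terms tends
to `0`. Dominated convergence for series (Tannery's theorem) then gives the limit `0`.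
-/

theorem tendsto_tsum_mul_of_tendsto_zero {α β : Type*} {l : Filter α} {w : α → β → ℝ}
    {a : β → ℝ} (ha : Summable a) (hw : ∀ p, Tendsto (w · p) l (𝓝 0))
    (hw_le : ∀ Q p, |w Q p| ≤ 1) :
    Tendsto (fun Q => ∑' p, w Q p * a p) l (𝓝 0) := by
  have key := tendsto_tsum_of_dominated_convergence (f := fun Q p => w Q p * a p)
    (g := fun _ => 0) ha.abs (fun p => by simpa using (hw p).mul_const (a p))
    (Eventually.of_forall fun Q p => by
      rw [Real.norm_eq_abs, abs_mul]
      exact mul_le_of_le_one_left (abs_nonneg _) (hw_le Q p))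
  simpa using key

theorem Real.abs_rpow_neg_abs_div_two_le_one {a : ℝ} (ha : 1 ≤ a) (x : ℝ) :
    |a ^ (-|x| / 2)| ≤ 1 := by
  rw [abs_of_nonneg (Real.rpow_nonneg (by linarith) _)]
  exact Real.rpow_le_one_of_one_le_of_nonpos ha (by linarith [abs_nonneg x])

theorem Real.tendsto_rpow_neg_abs_sub_div_two {a : ℝ} (ha : 1 < a) (p : ℝ) :
    Tendsto (fun y : ℝ => a ^ (-|p - y| / 2)) atTop (𝓝 0) := by
  have h_abs : Tendsto (fun y : ℝ => |p - y|) atTop atTop := by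
    refine (tendsto_abs_atTop_atTop.comp (tendsto_atTop_add_const_right _ (-p) tendsto_id)).congr
      fun y => ?_
    rw [Function.comp_apply, id, abs_sub_comm, sub_eq_add_neg]
  have h_exp : Tendsto (fun y : ℝ => -|p - y| / 2) atTop atBot :=
    (tendsto_neg_atTop_atBot.comp h_abs).atBot_div_const two_pos
  exact (tendsto_rpow_atBot_of_base_gt_one a ha).comp h_exp

theorem stmt_3_general (b : ℤ → ℝ)
    (hsum : Summable fun p : {p : ℤ // -1 ≤ p} => (2 : ℝ) ^ (((p : ℤ) : ℝ)) * b p) :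
    Tendsto (fun Q : ℤ =>
        ∑' p : {p : ℤ // -1 ≤ p},
          (2 : ℝ) ^ (-(|((p : ℤ) : ℝ) - (Q : ℝ)|) / 2) * (2 : ℝ) ^ (((p : ℤ) : ℝ)) * b p)
      atTop (nhds 0) := by
  simp_rw [mul_assoc]
  exact tendsto_tsum_mul_of_tendsto_zero hsum
    (fun p => (Real.tendsto_rpow_neg_abs_sub_div_two one_lt_two _).comp
      tendsto_intCast_atTop_atTop)
    (fun _ _ => Real.abs_rpow_neg_abs_div_two_le_one one_le_two _)

/-- If `(b_p)_{p ≥ -1}` is nonnegative with `∑_p 2^p b_p < ∞` and `2^Q b_Q → 0`, then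
`∑_{p ≥ -1} 2^{-|p-Q|/2} 2^p b_p → 0` as `Q → ∞`. -/
theorem stmt_3 (b : ℤ → ℝ) (hb : ∀ p, 0 ≤ b p)
    (hsum : Summable fun p : {p : ℤ // -1 ≤ p} => (2 : ℝ) ^ (((p : ℤ) : ℝ)) * b p)
    (hlim : Tendsto (fun Q : ℤ => (2 : ℝ) ^ ((Q : ℝ)) * b Q) atTop (nhds 0)) :
    Tendsto (fun Q : ℤ =>
        ∑' p : {p : ℤ // -1 ≤ p},
          (2 : ℝ) ^ (-(|((p : ℤ) : ℝ) - (Q : ℝ)|) / 2) * (2 : ℝ) ^ (((p : ℤ) : ℝ)) * b p)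
      atTop (nhds 0) :=
  stmt_3_general b hsum
end

section
/- For nonnegative (a_p)_{p≥-1} ∈ ℓ^2 and Q ≥ -1, ∑_{p > Q} a_p · ∑_{p' ≤ Q} 2^{p'} a_{p'} ≤ C ( ∑_{p > Q} 2^{(Q−p)/2} 2^p a_p^2 + ∑_{p' ≤ Q} 2^{(p'−Q)/2} 2^{p'} a_{p'}^2 ) for an absolute constant C. -/
open ENNReal

private lemma rp_add (x y : ℝ) : (2:ℝ) ^ x * (2:ℝ) ^ y = (2:ℝ) ^ (x + y) :=
  (Real.rpow_add (by norm_num) x y).symm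

private lemma rp_sq (x : ℝ) : ((2:ℝ) ^ x) ^ (2:ℕ) = (2:ℝ) ^ (2 * x) := by
  rw [← Real.rpow_natCast ((2:ℝ) ^ x) 2, ← Real.rpow_mul (by norm_num : (0:ℝ) ≤ 2)]
  norm_num [mul_comm]

private lemma rp_pow (x : ℝ) (n : ℕ) : ((2:ℝ) ^ x) ^ n = (2:ℝ) ^ (x * n) := by
  rw [← Real.rpow_natCast ((2:ℝ) ^ x) n, ← Real.rpow_mul (by norm_num : (0:ℝ) ≤ 2)]

private lemma key_ineq (a b p pp Q : ℝ) (ha : 0 ≤ a) (hb : 0 ≤ b) :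
    a * ((2:ℝ) ^ pp * b) ≤
      (2:ℝ) ^ ((pp - p)/4) *
        ((2:ℝ) ^ ((Q - p)/2) * 2 ^ p * a ^ 2 + (2:ℝ) ^ ((pp - Q)/2) * 2 ^ pp * b ^ 2) := by
  set u : ℝ := (2:ℝ) ^ ((Q - p)/4 + p/2) * a with hu
  set v : ℝ := (2:ℝ) ^ ((pp - Q)/4 + pp/2) * b with hv
  have hu0 : 0 ≤ u := mul_nonneg (Real.rpow_pos_of_pos (by norm_num) _).le ha
  have hv0 : 0 ≤ v := mul_nonneg (Real.rpow_pos_of_pos (by norm_num) _).le hb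
  have hE : (2:ℝ) ^ ((pp - p)/4) * (2:ℝ) ^ ((Q - p)/4 + p/2) * (2:ℝ) ^ ((pp - Q)/4 + pp/2)
      = (2:ℝ) ^ pp := by
    rw [rp_add, rp_add]; congr 1; ring
  have h1 : a * ((2:ℝ) ^ pp * b) = (2:ℝ) ^ ((pp - p)/4) * (u * v) := by
    rw [hu, hv]; linear_combination (-(a * b)) * hE
  have hu2 : u ^ 2 = (2:ℝ) ^ ((Q - p)/2) * 2 ^ p * a ^ 2 := by
    rw [hu, mul_pow, rp_sq, show 2 * ((Q - p)/4 + p/2) = (Q - p)/2 + p by ring, ← rp_add]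
  have hv2 : v ^ 2 = (2:ℝ) ^ ((pp - Q)/2) * 2 ^ pp * b ^ 2 := by
    rw [hv, mul_pow, rp_sq, show 2 * ((pp - Q)/4 + pp/2) = (pp - Q)/2 + pp by ring, ← rp_add]
  calc a * ((2:ℝ) ^ pp * b) = (2:ℝ) ^ ((pp - p)/4) * (u * v) := h1
    _ ≤ (2:ℝ) ^ ((pp - p)/4) * (u ^ 2 + v ^ 2) := by
        apply mul_le_mul_of_nonneg_left _ (Real.rpow_pos_of_pos (by norm_num) _).le
        nlinarith [sq_nonneg (u - v), mul_nonneg hu0 hv0]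
    _ = _ := by rw [hu2, hv2]

/-- Weighted Cauchy–Schwarz estimate: there is an absolute constant `C > 0` such that for
every nonnegative square-summable `(a_p)_{p ≥ -1}` and every `Q ≥ -1`,
`(∑_{p > Q} a_p) · (∑_{-1 ≤ p' ≤ Q} 2^{p'} a_{p'})
  ≤ C (∑_{p > Q} 2^{(Q-p)/2} 2^p a_p² + ∑_{-1 ≤ p' ≤ Q} 2^{(p'-Q)/2} 2^{p'} a_{p'}²)`
(sums in `ℝ≥0∞`). -/
theorem stmt_10 :
    ∃ C : ℝ≥0∞, 0 < C ∧ C ≠ ⊤ ∧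
      ∀ (a : ℤ → ℝ), (∀ p, 0 ≤ a p) →
        (Summable fun p : {p : ℤ // -1 ≤ p} => a p ^ 2) →
        ∀ Q : ℤ, -1 ≤ Q →
          (∑' p : {p : ℤ // Q < p}, ENNReal.ofReal (a p)) *
            (∑' p : {p : ℤ // -1 ≤ p ∧ p ≤ Q},
              ENNReal.ofReal ((2 : ℝ) ^ (((p : ℤ) : ℝ)) * a p)) ≤
          C * ((∑' p : {p : ℤ // Q < p},
                ENNReal.ofReal
                  ((2 : ℝ) ^ (((Q : ℝ) - ((p : ℤ) : ℝ)) / 2) * 2 ^ (((p : ℤ) : ℝ)) * a p ^ 2)) +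
              ∑' p : {p : ℤ // -1 ≤ p ∧ p ≤ Q},
                ENNReal.ofReal
                  ((2 : ℝ) ^ ((((p : ℤ) : ℝ) - (Q : ℝ)) / 2) * 2 ^ (((p : ℤ) : ℝ)) * a p ^ 2)) := by
  classical
  set r : ℝ≥0∞ := ENNReal.ofReal ((2:ℝ) ^ (-(1:ℝ)/4)) with hr
  have hrlt : r < 1 := by
    rw [hr, ← ENNReal.ofReal_one]
    exact (ENNReal.ofReal_lt_ofReal_iff_of_nonneg (by positivity)).mpr
      (Real.rpow_lt_one_of_one_lt_of_neg (by norm_num) (by norm_num))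
  set K : ℝ≥0∞ := (1 - r)⁻¹ with hK
  have h1r : (1:ℝ≥0∞) - r ≠ 0 :=
    fun h => hrlt.not_ge (tsub_eq_zero_iff_le.mp h)
  have hKtop : K ≠ ⊤ := ENNReal.inv_ne_top.mpr h1r
  have hKpos : 0 < K := ENNReal.inv_pos.mpr (by
    exact ne_top_of_le_ne_top one_ne_top tsub_le_self)
  refine ⟨K, hKpos, hKtop, ?_⟩
  intro a ha _hsum Q hQ
  -- abbreviations
  set c : ℤ → ℤ → ℝ≥0∞ := fun p pp => ENNReal.ofReal ((2:ℝ) ^ (((pp:ℝ) - (p:ℝ))/4)) with hc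
  have hrpow : ∀ n : ℕ, r ^ n = ENNReal.ofReal ((2:ℝ) ^ (-(1:ℝ)/4 * n)) := by
    intro n
    rw [hr, ← ENNReal.ofReal_pow (by positivity), rp_pow]
  -- sum of c over the second index, p > Q fixed
  have hK1 : ∀ p : {p : ℤ // Q < p}, (∑' pp : {p : ℤ // -1 ≤ p ∧ p ≤ Q}, c p pp) ≤ K := by
    intro p
    have hinj : Function.Injective
        (fun pp : {p : ℤ // -1 ≤ p ∧ p ≤ Q} => (Q - (pp:ℤ)).toNat) := by
      intro x y h
      have hx := x.2; have hy := y.2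
      exact Subtype.ext (by simp only at h; omega)
    calc (∑' pp : {p : ℤ // -1 ≤ p ∧ p ≤ Q}, c p pp)
        ≤ ∑' pp : {p : ℤ // -1 ≤ p ∧ p ≤ Q}, r ^ ((Q - (pp:ℤ)).toNat) := by
          apply ENNReal.tsum_le_tsum
          intro pp
          rw [hrpow, hc]
          apply ENNReal.ofReal_le_ofReal
          apply Real.rpow_le_rpow_of_exponent_le (by norm_num)
          have h1 : ((Q - (pp:ℤ)).toNat : ℝ) = (Q:ℝ) - ((pp:ℤ):ℝ) := by
            have h2 := pp.2.2
            have ht : ((Q - (pp:ℤ)).toNat : ℤ) = Q - (pp:ℤ) := Int.toNat_of_nonneg (by omega)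
            exact_mod_cast congrArg (fun z : ℤ => (z:ℝ)) ht
          rw [h1]
          have hp := p.2
          have : ((pp:ℤ):ℝ) - ((p:ℤ):ℝ) ≤ ((pp:ℤ):ℝ) - (Q:ℝ) := by
            have : (Q:ℝ) ≤ ((p:ℤ):ℝ) := by exact_mod_cast hp.le
            linarith
          linarith
      _ ≤ ∑' n : ℕ, r ^ n :=
          ENNReal.tsum_comp_le_tsum_of_injective hinj (fun n => r ^ n)
      _ = K := by rw [ENNReal.tsum_geometric, hK]
  -- sum of c over the first index, pp ≤ Q fixed
  have hK2 : ∀ pp : {p : ℤ // -1 ≤ p ∧ p ≤ Q}, (∑' p : {p : ℤ // Q < p}, c p pp) ≤ K := by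
    intro pp
    have hinj : Function.Injective
        (fun p : {p : ℤ // Q < p} => ((p:ℤ) - Q).toNat) := by
      intro x y h
      have hx := x.2; have hy := y.2
      exact Subtype.ext (by simp only at h; omega)
    calc (∑' p : {p : ℤ // Q < p}, c p pp)
        ≤ ∑' p : {p : ℤ // Q < p}, r ^ (((p:ℤ) - Q).toNat) := by
          apply ENNReal.tsum_le_tsum
          intro p
          rw [hrpow, hc]
          apply ENNReal.ofReal_le_ofReal
          apply Real.rpow_le_rpow_of_exponent_le (by norm_num)
          have h1 : ((((p:ℤ) - Q).toNat : ℕ) : ℝ) = ((p:ℤ):ℝ) - (Q:ℝ) := by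
            have hp := p.2
            have ht : ((((p:ℤ) - Q).toNat : ℕ) : ℤ) = (p:ℤ) - Q := Int.toNat_of_nonneg (by omega)
            exact_mod_cast congrArg (fun z : ℤ => (z:ℝ)) ht
          rw [h1]
          have hpp := pp.2.2
          have : ((pp:ℤ):ℝ) ≤ (Q:ℝ) := by exact_mod_cast hpp
          linarith
      _ ≤ ∑' n : ℕ, r ^ n :=
          ENNReal.tsum_comp_le_tsum_of_injective hinj (fun n => r ^ n)
      _ = K := by rw [ENNReal.tsum_geometric, hK]
  -- names for the four sums
  set A : ℝ≥0∞ := ∑' p : {p : ℤ // Q < p},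
      ENNReal.ofReal ((2 : ℝ) ^ (((Q : ℝ) - ((p : ℤ) : ℝ)) / 2) * 2 ^ (((p : ℤ) : ℝ)) * a p ^ 2)
    with hA
  set B : ℝ≥0∞ := ∑' p : {p : ℤ // -1 ≤ p ∧ p ≤ Q},
      ENNReal.ofReal ((2 : ℝ) ^ ((((p : ℤ) : ℝ) - (Q : ℝ)) / 2) * 2 ^ (((p : ℤ) : ℝ)) * a p ^ 2)
    with hB
  have hAp : ∀ p : {p : ℤ // Q < p},
      ENNReal.ofReal ((2 : ℝ) ^ (((Q : ℝ) - ((p : ℤ) : ℝ)) / 2) * 2 ^ (((p : ℤ) : ℝ)) * a p ^ 2)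
      ≤ A := fun p => ENNReal.le_tsum p
  -- main computation
  have step1 :
      (∑' p : {p : ℤ // Q < p}, ENNReal.ofReal (a p)) *
        (∑' pp : {p : ℤ // -1 ≤ p ∧ p ≤ Q},
          ENNReal.ofReal ((2 : ℝ) ^ (((pp : ℤ) : ℝ)) * a pp)) =
      ∑' p : {p : ℤ // Q < p}, ∑' pp : {p : ℤ // -1 ≤ p ∧ p ≤ Q},
        ENNReal.ofReal (a p) * ENNReal.ofReal ((2 : ℝ) ^ (((pp : ℤ) : ℝ)) * a pp) := by
    rw [← ENNReal.tsum_mul_right]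
    exact tsum_congr fun p => (ENNReal.tsum_mul_left).symm
  have hterm : ∀ (p : {p : ℤ // Q < p}) (pp : {p : ℤ // -1 ≤ p ∧ p ≤ Q}),
      ENNReal.ofReal (a p) * ENNReal.ofReal ((2 : ℝ) ^ (((pp : ℤ) : ℝ)) * a pp) ≤
        c p pp * ENNReal.ofReal
            ((2 : ℝ) ^ (((Q : ℝ) - ((p : ℤ) : ℝ)) / 2) * 2 ^ (((p : ℤ) : ℝ)) * a p ^ 2)
        + c p pp * ENNReal.ofReal
            ((2 : ℝ) ^ ((((pp : ℤ) : ℝ) - (Q : ℝ)) / 2) * 2 ^ (((pp : ℤ) : ℝ)) * a pp ^ 2) := by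
    intro p pp
    rw [← ENNReal.ofReal_mul (ha _)]
    calc ENNReal.ofReal (a p * ((2 : ℝ) ^ (((pp : ℤ) : ℝ)) * a pp))
        ≤ ENNReal.ofReal ((2:ℝ) ^ ((((pp:ℤ):ℝ) - ((p:ℤ):ℝ))/4) *
            ((2 : ℝ) ^ (((Q : ℝ) - ((p : ℤ) : ℝ)) / 2) * 2 ^ (((p : ℤ) : ℝ)) * a p ^ 2 +
             (2 : ℝ) ^ ((((pp : ℤ) : ℝ) - (Q : ℝ)) / 2) * 2 ^ (((pp : ℤ) : ℝ)) * a pp ^ 2)) :=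
          ENNReal.ofReal_le_ofReal
            (key_ineq (a p) (a pp) ((p:ℤ):ℝ) ((pp:ℤ):ℝ) (Q:ℝ) (ha _) (ha _))
      _ = _ := by
          rw [ENNReal.ofReal_mul (by positivity),
            ENNReal.ofReal_add (by positivity) (by positivity), mul_add]
  calc (∑' p : {p : ℤ // Q < p}, ENNReal.ofReal (a p)) *
        (∑' pp : {p : ℤ // -1 ≤ p ∧ p ≤ Q},
          ENNReal.ofReal ((2 : ℝ) ^ (((pp : ℤ) : ℝ)) * a pp))
      = ∑' p : {p : ℤ // Q < p}, ∑' pp : {p : ℤ // -1 ≤ p ∧ p ≤ Q},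
          ENNReal.ofReal (a p) * ENNReal.ofReal ((2 : ℝ) ^ (((pp : ℤ) : ℝ)) * a pp) := step1
    _ ≤ ∑' p : {p : ℤ // Q < p}, ∑' pp : {p : ℤ // -1 ≤ p ∧ p ≤ Q},
          (c p pp * ENNReal.ofReal
              ((2 : ℝ) ^ (((Q : ℝ) - ((p : ℤ) : ℝ)) / 2) * 2 ^ (((p : ℤ) : ℝ)) * a p ^ 2)
           + c p pp * ENNReal.ofReal
              ((2 : ℝ) ^ ((((pp : ℤ) : ℝ) - (Q : ℝ)) / 2) * 2 ^ (((pp : ℤ) : ℝ)) * a pp ^ 2)) :=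
        ENNReal.tsum_le_tsum fun p => ENNReal.tsum_le_tsum fun pp => hterm p pp
    _ = (∑' p : {p : ℤ // Q < p}, ∑' pp : {p : ℤ // -1 ≤ p ∧ p ≤ Q},
          c p pp * ENNReal.ofReal
              ((2 : ℝ) ^ (((Q : ℝ) - ((p : ℤ) : ℝ)) / 2) * 2 ^ (((p : ℤ) : ℝ)) * a p ^ 2))
        + ∑' p : {p : ℤ // Q < p}, ∑' pp : {p : ℤ // -1 ≤ p ∧ p ≤ Q},
          c p pp * ENNReal.ofReal
              ((2 : ℝ) ^ ((((pp : ℤ) : ℝ) - (Q : ℝ)) / 2) * 2 ^ (((pp : ℤ) : ℝ)) * a pp ^ 2) := by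
        rw [← ENNReal.tsum_add]
        exact tsum_congr fun p => ENNReal.tsum_add
    _ ≤ K * A + K * B := by
        gcongr
        · -- first double sum ≤ K * A
          calc (∑' p : {p : ℤ // Q < p}, ∑' pp : {p : ℤ // -1 ≤ p ∧ p ≤ Q},
                c p pp * ENNReal.ofReal
                  ((2 : ℝ) ^ (((Q : ℝ) - ((p : ℤ) : ℝ)) / 2) * 2 ^ (((p : ℤ) : ℝ)) * a p ^ 2))
              = ∑' p : {p : ℤ // Q < p}, (∑' pp : {p : ℤ // -1 ≤ p ∧ p ≤ Q}, c p pp) *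
                  ENNReal.ofReal
                    ((2 : ℝ) ^ (((Q : ℝ) - ((p : ℤ) : ℝ)) / 2) * 2 ^ (((p : ℤ) : ℝ)) * a p ^ 2) :=
                tsum_congr fun p => ENNReal.tsum_mul_right
            _ ≤ ∑' p : {p : ℤ // Q < p}, K *
                  ENNReal.ofReal
                    ((2 : ℝ) ^ (((Q : ℝ) - ((p : ℤ) : ℝ)) / 2) * 2 ^ (((p : ℤ) : ℝ)) * a p ^ 2) :=
                ENNReal.tsum_le_tsum fun p => mul_le_mul_left (hK1 p) _
            _ = K * A := by rw [ENNReal.tsum_mul_left, hA]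
        · -- second double sum ≤ K * B
          calc (∑' p : {p : ℤ // Q < p}, ∑' pp : {p : ℤ // -1 ≤ p ∧ p ≤ Q},
                c p pp * ENNReal.ofReal
                  ((2 : ℝ) ^ ((((pp : ℤ) : ℝ) - (Q : ℝ)) / 2) * 2 ^ (((pp : ℤ) : ℝ)) * a pp ^ 2))
              = ∑' pp : {p : ℤ // -1 ≤ p ∧ p ≤ Q}, ∑' p : {p : ℤ // Q < p},
                c p pp * ENNReal.ofReal
                  ((2 : ℝ) ^ ((((pp : ℤ) : ℝ) - (Q : ℝ)) / 2) * 2 ^ (((pp : ℤ) : ℝ)) * a pp ^ 2) :=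
                ENNReal.tsum_comm
            _ = ∑' pp : {p : ℤ // -1 ≤ p ∧ p ≤ Q}, (∑' p : {p : ℤ // Q < p}, c p pp) *
                  ENNReal.ofReal
                    ((2 : ℝ) ^ ((((pp : ℤ) : ℝ) - (Q : ℝ)) / 2) * 2 ^ (((pp : ℤ) : ℝ)) * a pp ^ 2) :=
                tsum_congr fun pp => ENNReal.tsum_mul_right
            _ ≤ ∑' pp : {p : ℤ // -1 ≤ p ∧ p ≤ Q}, K *
                  ENNReal.ofReal
                    ((2 : ℝ) ^ ((((pp : ℤ) : ℝ) - (Q : ℝ)) / 2) * 2 ^ (((pp : ℤ) : ℝ)) * a pp ^ 2) :=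
                ENNReal.tsum_le_tsum fun pp => mul_le_mul_left (hK2 pp) _
            _ = K * B := by rw [ENNReal.tsum_mul_left, hB]
    _ = K * (A + B) := (mul_add K A B).symm
end
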